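/- Define f : ℕ → ℕ by f(0) = 2, f(1) = 8, and f(m) = 7f(m−1) + 4f(m−2) for all m ≥ 2. Then for every m ≥ 1, f(m) equals the cardinality of the OP-LOCO code OPC(m). -/

import Mathlib

/-- The OP-LOCO code: words of length `m` over the alphabet `{0,...,7}`
(position `m-1` most significant) containing no contiguous subword `u 2 v` with
`u, v ∈ {0,1,4,5}` and no contiguous subword `u 5 v` with `u, v ∈ {2,3,6,7}`. -/
def OPC (m : ℕ) : Set (Fin m → Fin 8) :=
  {c | ∀ i : ℕ, ∀ h : i + 2 < m,
      ¬((c ⟨i + 2, h⟩ ∈ ({0, 1, 4, 5} : Set (Fin 8)) ∧ c ⟨i + 1, by omega⟩ = 2 ∧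
            c ⟨i, by omega⟩ ∈ ({0, 1, 4, 5} : Set (Fin 8))) ∨
        (c ⟨i + 2, h⟩ ∈ ({2, 3, 6, 7} : Set (Fin 8)) ∧ c ⟨i + 1, by omega⟩ = 5 ∧
            c ⟨i, by omega⟩ ∈ ({2, 3, 6, 7} : Set (Fin 8))))}

/-!
Grow words at the least significant end. Call a word dangerous if its two lowest letters `a`, `b`
can be completed to a forbidden subword `b a x`, i.e. `a = 2, b ∈ {0,1,4,5}` or
`a = 5, b ∈ {2,3,6,7}`. A dangerous word has 4 admissible extensions, any other word 8. Since `b`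
lies in exactly one of the two classes, exactly one letter `x ∈ {2, 5}` makes the extension
dangerous, and it is admissible iff the word was not dangerous. Writing `N m = |OPC m|` and `D m`
for the number of dangerous words, this gives `N (m+1) + 4 D m = 8 N m` and
`D (m+1) + D m = N m` for `m ≥ 2`, which eliminate to `N (m+2) = 7 N (m+1) + 4 N m`.
-/

open Finset

theorem card_filter_fin_cons {α : Type*} [Fintype α] {n : ℕ} (P : (Fin (n + 1) → α) → Prop)
    [DecidablePred P] : #{c | P c} = ∑ w : Fin n → α, #{x | P (Fin.cons x w)} := by
  simp only [card_filter]
  rw [← (Fin.consEquiv fun _ => α).sum_comp, Fintype.sum_prod_type, sum_comm]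
  rfl

namespace OPLOCO

def Forbidden (u a v : Fin 8) : Prop :=
  (u ∈ ({0, 1, 4, 5} : Set (Fin 8)) ∧ a = 2 ∧ v ∈ ({0, 1, 4, 5} : Set (Fin 8))) ∨
    (u ∈ ({2, 3, 6, 7} : Set (Fin 8)) ∧ a = 5 ∧ v ∈ ({2, 3, 6, 7} : Set (Fin 8)))

instance (u a v : Fin 8) : Decidable (Forbidden u a v) := by unfold Forbidden; infer_instance

def Dangerous (a b : Fin 8) : Prop := ∃ x, Forbidden b a x

instance (a b : Fin 8) : Decidable (Dangerous a b) := by unfold Dangerous; infer_instance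

theorem card_not_forbidden (a b : Fin 8) :
    #{x | ¬Forbidden b a x} = if Dangerous a b then 4 else 8 := by
  revert a b; decide

theorem card_not_forbidden_dangerous (a b : Fin 8) :
    #{x | ¬Forbidden b a x ∧ Dangerous x a} = if Dangerous a b then 0 else 1 := by
  revert a b; decide

theorem cons_mem_OPC {n : ℕ} (x : Fin 8) (w : Fin (n + 2) → Fin 8) :
    Fin.cons x w ∈ OPC (n + 3) ↔ ¬Forbidden (w 1) (w 0) x ∧ w ∈ OPC (n + 2) := by
  rw [← Fin.mk_one, ← Fin.zero_eta]
  constructor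
  · intro h
    have h0 := h 0 (by omega)
    exact ⟨h0, fun i hi => h (i + 1) (by omega)⟩
  · rintro ⟨hx, hw⟩ (_ | i) hi
    · exact hx
    · exact hw i (by omega)

theorem OPC_eq_univ_of_le_two {m : ℕ} (hm : m ≤ 2) : OPC m = Set.univ :=
  Set.eq_univ_of_forall fun _ i hi => absurd hi (by omega)

theorem ncard_OPC_of_le_two {m : ℕ} (hm : m ≤ 2) : (OPC m).ncard = 8 ^ m := by
  simp [OPC_eq_univ_of_le_two hm, Set.ncard_univ]

open Classical

theorem ncard_OPC_eq_card_filter (m : ℕ) : (OPC m).ncard = #{c | c ∈ OPC m} := by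
  rw [← Set.ncard_coe_finset, coe_filter_univ]
  rfl

theorem card_filter_OPC_succ (Q : Fin 8 → Fin 8 → Prop) [DecidableRel Q] (n : ℕ) :
    #{c : Fin (n + 3) → Fin 8 | c ∈ OPC (n + 3) ∧ Q (c 0) (c 1)} =
      ∑ w ∈ {w | w ∈ OPC (n + 2)}, #{x | ¬Forbidden (w 1) (w 0) x ∧ Q x (w 0)} := by
  rw [card_filter_fin_cons, sum_filter]
  refine sum_congr rfl fun w _ => ?_
  split_ifs with hw <;> simp [cons_mem_OPC, hw]

noncomputable def numDangerous (n : ℕ) : ℕ :=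
  #{c : Fin (n + 2) → Fin 8 | c ∈ OPC (n + 2) ∧ Dangerous (c 0) (c 1)}

theorem numDangerous_zero : numDangerous 0 = 8 :=
  calc numDangerous 0 = #{c : Fin 2 → Fin 8 | Dangerous (c 0) (c 1)} := by
        simp [numDangerous, OPC_eq_univ_of_le_two]
    _ = 8 := by decide

theorem numDangerous_add_card_safe (n : ℕ) :
    numDangerous n + #{c : Fin (n + 2) → Fin 8 | c ∈ OPC (n + 2) ∧ ¬Dangerous (c 0) (c 1)} =
      (OPC (n + 2)).ncard := by
  rw [numDangerous, ncard_OPC_eq_card_filter, ← filter_filter, ← filter_filter,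
    card_filter_add_card_filter_not]

theorem ncard_OPC_add_three_add_numDangerous (n : ℕ) :
    (OPC (n + 3)).ncard + 4 * numDangerous n = 8 * (OPC (n + 2)).ncard := by
  have h := card_filter_OPC_succ (fun _ _ => True) n
  simp only [and_true, card_not_forbidden, sum_ite, sum_const, smul_eq_mul] at h
  rw [← numDangerous_add_card_safe n, ncard_OPC_eq_card_filter, h, numDangerous,
    filter_filter, filter_filter]
  ring

theorem numDangerous_succ_add_numDangerous (n : ℕ) :
    numDangerous (n + 1) + numDangerous n = (OPC (n + 2)).ncard := by
  have h := card_filter_OPC_succ Dangerous n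
  simp only [card_not_forbidden_dangerous, sum_ite, sum_const, smul_eq_mul] at h
  rw [← numDangerous_add_card_safe n, numDangerous, h, numDangerous, filter_filter, filter_filter]
  ring

theorem ncard_OPC_add_three (n : ℕ) :
    (OPC (n + 3)).ncard = 7 * (OPC (n + 2)).ncard + 4 * (OPC (n + 1)).ncard := by
  cases n with
  | zero =>
    have h : (OPC 3).ncard + 4 * numDangerous 0 = 8 * (OPC 2).ncard :=
      ncard_OPC_add_three_add_numDangerous 0
    rw [numDangerous_zero, ncard_OPC_of_le_two le_rfl] at h
    show (OPC 3).ncard = 7 * (OPC 2).ncard + 4 * (OPC 1).ncard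
    rw [ncard_OPC_of_le_two le_rfl, ncard_OPC_of_le_two one_le_two]
    omega
  | succ n =>
    have h₁ : (OPC (n + 3)).ncard + 4 * numDangerous n = 8 * (OPC (n + 2)).ncard :=
      ncard_OPC_add_three_add_numDangerous n
    have h₂ : (OPC (n + 4)).ncard + 4 * numDangerous (n + 1) = 8 * (OPC (n + 3)).ncard :=
      ncard_OPC_add_three_add_numDangerous (n + 1)
    have h₃ := numDangerous_succ_add_numDangerous n
    show (OPC (n + 4)).ncard = 7 * (OPC (n + 3)).ncard + 4 * (OPC (n + 2)).ncard
    omega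

end OPLOCO

theorem stmt9 (f : ℕ → ℕ) (hf0 : f 0 = 2) (hf1 : f 1 = 8)
    (hrec : ∀ m : ℕ, 2 ≤ m → f m = 7 * f (m - 1) + 4 * f (m - 2)) :
    ∀ m : ℕ, 1 ≤ m → (OPC m).ncard = f m := by
  have key : ∀ k, (OPC (k + 1)).ncard = f (k + 1) ∧ (OPC (k + 2)).ncard = f (k + 2) := by
    intro k
    induction k with
    | zero =>
      have hf2 : f 2 = 64 := by rw [hrec 2 le_rfl]; simp [hf0, hf1]
      exact ⟨(OPLOCO.ncard_OPC_of_le_two one_le_two).trans hf1.symm,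
        (OPLOCO.ncard_OPC_of_le_two le_rfl).trans hf2.symm⟩
    | succ k ih =>
      refine ⟨ih.2, ?_⟩
      show (OPC (k + 3)).ncard = f (k + 3)
      rw [OPLOCO.ncard_OPC_add_three, ih.1, ih.2, hrec (k + 3) (by omega)]
      rfl
  intro m hm
  obtain ⟨k, rfl⟩ := Nat.exists_eq_add_of_le' hm
  exact (key k).1
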